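/- The intrinsic multi-differential operators are compatible with concatenation: 𝔇_K ∘ 𝔇_L = 𝔇_{KL} on B, where KL is the componentwise sum of multi-indices. -/

import Mathlib

open MvPolynomial

/-- Jet variables: the independent variables `x i` and the derivatives `u^α_K`. -/
abbrev JetVar (p q : ℕ) := Sum (Fin p) (Fin q × (Fin p →₀ ℕ))

/-- The ring `A` of differential (polynomial) functions on the jet manifold. -/
abbrev JetRing (p q : ℕ) := MvPolynomial (JetVar p q) ℚ

/-- The total differential operator `D_i = ∂/∂x_i + Σ_{α,K} u^α_{Ki} ∂/∂u^α_K`. -/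
noncomputable def totalD (p q : ℕ) (i : Fin p) :
    Derivation ℚ (JetRing p q) (JetRing p q) :=
  MvPolynomial.mkDerivation ℚ (fun v => match v with
    | Sum.inl j => if i = j then 1 else 0
    | Sum.inr (α, K) => X (Sum.inr (α, K + Finsupp.single i 1)))

/-- The multi total differential operator `D_K = D_1^{K_1} ∘ ⋯ ∘ D_p^{K_p}`. -/
noncomputable def DmultiK (p q : ℕ) (K : Fin p →₀ ℕ) :
    Module.End ℚ (JetRing p q) :=
  (List.finRange p).foldr (fun i f => ((totalD p q i).toLinearMap ^ (K i)) * f) 1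

/-- A system of PDEs `u^{i^α}_{J^α} = P^α` together with a ranking `rk` on
`ℕ_q × ℕ^p`: a total order which is positive and compatible with addition,
and with all `J^α ≠ 0`. -/
structure OrthoSystem (p q n : ℕ) where
  ii : Fin n → Fin q
  JJ : Fin n → (Fin p →₀ ℕ)
  P : Fin n → JetRing p q
  rk : (Fin q × (Fin p →₀ ℕ)) → (Fin q × (Fin p →₀ ℕ)) → Prop
  rk_refl : ∀ a, rk a a
  rk_total : ∀ a b, rk a b ∨ rk b a
  rk_antisymm : ∀ a b, rk a b → rk b a → a = b
  rk_trans : ∀ a b c, rk a b → rk b c → rk a c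
  rk_pos : ∀ (j : Fin q) (K L : Fin p →₀ ℕ), rk (j, K) (j, K + L)
  rk_compat : ∀ (i j : Fin q) (J K L : Fin p →₀ ℕ),
    rk (i, J) (j, K) ↔ rk (i, J + L) (j, K + L)
  J_ne : ∀ α, JJ α ≠ 0

variable {p q n : ℕ}

/-- The strict part of the ranking. -/
def OrthoSystem.rlt (S : OrthoSystem p q n) (a b : Fin q × (Fin p →₀ ℕ)) : Prop :=
  S.rk a b ∧ a ≠ b

/-- A derivative `u^j_K` is principal if `(j,K) = (i^α, J^α L)` for some `α, L`. -/
def OrthoSystem.principal (S : OrthoSystem p q n) (v : Fin q × (Fin p →₀ ℕ)) : Prop :=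
  ∃ (α : Fin n) (L : Fin p →₀ ℕ), v = (S.ii α, S.JJ α + L)

/-- `Q` belongs to the subring `B` of functions of parametric derivatives only. -/
def OrthoSystem.inB (S : OrthoSystem p q n) (Q : JetRing p q) : Prop :=
  ∀ (jK : Fin q × (Fin p →₀ ℕ)), Sum.inr jK ∈ Q.vars → ¬ S.principal jK

/-- Orthonomy: `P^α` depends only on parametric derivatives `u^j_K` with
`(j,K) < (i^α, J^α)`. -/
def OrthoSystem.orthonomic (S : OrthoSystem p q n) : Prop :=
  ∀ (α : Fin n) (jK : Fin q × (Fin p →₀ ℕ)), Sum.inr jK ∈ (S.P α).vars →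
    ¬ S.principal jK ∧ S.rlt jK (S.ii α, S.JJ α)

/-- Passivity: `(i^α, J^α K) = (i^β, J^β L)` implies `D_K P^α = D_L P^β`. -/
def OrthoSystem.passive (S : OrthoSystem p q n) : Prop :=
  ∀ (α β : Fin n) (K L : Fin p →₀ ℕ),
    (S.ii α, S.JJ α + K) = (S.ii β, S.JJ β + L) →
    DmultiK p q K (S.P α) = DmultiK p q L (S.P β)

/-- The differential ideal generated by the `Δ^α = u^{i^α}_{J^α} − P^α`. -/
noncomputable def OrthoSystem.diffIdeal (S : OrthoSystem p q n) : Ideal (JetRing p q) :=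
  Ideal.span { x | ∃ (α : Fin n) (L : Fin p →₀ ℕ),
    x = DmultiK p q L (X (Sum.inr (S.ii α, S.JJ α)) - S.P α) }

open Classical in
/-- The reduction `Q ↦ Q̃`: the element of `B` congruent to `Q` modulo the
differential ideal generated by `Δ` (when it exists). -/
noncomputable def OrthoSystem.red (S : OrthoSystem p q n) (Q : JetRing p q) :
    JetRing p q :=
  if h : ∃ R, S.inB R ∧ Q - R ∈ S.diffIdeal then h.choose else 0

/-- The intrinsic multi-differential operator `𝔇_K P = (D_K P)~`. -/
noncomputable def OrthoSystem.dfrakK (S : OrthoSystem p q n) (K : Fin p →₀ ℕ)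
    (Q : JetRing p q) : JetRing p q :=
  S.red (DmultiK p q K Q)

/-- The intrinsic total differential operator `𝔇_j P = (D_j P)~`. -/
noncomputable def OrthoSystem.dfrak (S : OrthoSystem p q n) (j : Fin p)
    (Q : JetRing p q) : JetRing p q :=
  S.red (totalD p q j Q)

open Classical in
/-- The intrinsic prolongation `𝔭𝔯_Q = Σ_{(j,K)∈S} (𝔇_K Q^j) ∂/∂u^j_K`. -/
noncomputable def OrthoSystem.iprolong (S : OrthoSystem p q n)
    (Q : Fin q → JetRing p q) : Derivation ℚ (JetRing p q) (JetRing p q) :=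
  MvPolynomial.mkDerivation ℚ (fun v => match v with
    | Sum.inl _ => 0
    | Sum.inr (j, K) => if S.principal (j, K) then 0 else S.dfrakK K (Q j))

/-!
Substituting, by well-founded recursion along the ranking, each principal derivative
`u^{i^α}_{J^α L}` by the normal form of `D_L P^α` defines an algebra endomorphism
`φ = normalForm` of `A` with values in `B`, congruent to the identity modulo the differential
ideal `I` generated by the `Δ^α`, and fixing `B`. Orthonomy makes the recursion well founded:
`D_L P^α` only involves derivatives ranked below `(i^α, J^α L)`. Passivity makes
`φ(u^{i^α}_{J^α L}) = φ(D_L P^α)` for every choice of `α, L`, so `φ` kills `I`. Hence every `Q`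
has a unique `Q̃ ∈ B` with `Q ≡ Q̃ mod I`. Since `I` is stable under the total derivatives,
`D_K Q̃ ≡ D_K Q`, so `(D_K Q̃)~ = (D_K Q)~`; with `Q = D_L P` and `D_K D_L = D_{K+L}` this is
the claim.
-/

namespace MvPolynomial

variable {R σ A : Type*} [CommSemiring R] [CommSemiring A] [Algebra R A]

theorem aeval_congr_of_mem_supported {s : Set σ} {f g : σ → A} {Q : MvPolynomial σ R}
    (hQ : Q ∈ supported R s) (hfg : Set.EqOn f g s) : aeval f Q = aeval g Q := by
  rw [supported_eq_range_rename, AlgHom.mem_range] at hQ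
  obtain ⟨Q, rfl⟩ := hQ
  rw [aeval_rename, aeval_rename]
  exact congrArg (aeval · Q) (_root_.funext fun v : s => hfg v.2)

theorem aeval_mem_of_mem_supported {s : Set σ} {f : σ → A} {B : Subalgebra R A}
    {Q : MvPolynomial σ R} (hQ : Q ∈ supported R s) (hf : Set.MapsTo f s B) :
    aeval f Q ∈ B := by
  rw [supported_eq_range_rename, AlgHom.mem_range] at hQ
  obtain ⟨Q, rfl⟩ := hQ
  rw [aeval_rename]
  have hQ := AlgHom.mem_range_self (aeval (R := R) (f ∘ ((↑) : s → σ))) Q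
  rw [aeval_range] at hQ
  exact Algebra.adjoin_le (Set.range_subset_iff.2 fun v => hf v.2) hQ

theorem mk_aeval_eq_mk {R σ : Type*} [CommRing R] {I : Ideal (MvPolynomial σ R)}
    {f : σ → MvPolynomial σ R} (hf : ∀ v, Ideal.Quotient.mk I (f v) = Ideal.Quotient.mk I (X v))
    (Q : MvPolynomial σ R) : Ideal.Quotient.mk I (aeval f Q) = Ideal.Quotient.mk I Q := by
  have : (Ideal.Quotient.mkₐ R I).comp (aeval f) = Ideal.Quotient.mkₐ R I :=
    algHom_ext fun v => by simpa using hf v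
  exact DFunLike.congr_fun this Q

theorem derivation_mem_supported {R σ : Type*} [CommSemiring R]
    (d : Derivation R (MvPolynomial σ R) (MvPolynomial σ R)) {s t : Set σ} (hst : s ⊆ t)
    (hd : ∀ v ∈ s, d (X v) ∈ supported R t) {Q : MvPolynomial σ R}
    (hQ : Q ∈ supported R s) : d Q ∈ supported R t := by
  rw [supported_eq_adjoin_X] at hQ
  induction hQ using Algebra.adjoin_induction with
  | mem x hx =>
    obtain ⟨v, hv, rfl⟩ := hx
    exact hd v hv
  | algebraMap r => simp
  | add x y _ _ hx hy => simpa using add_mem hx hy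
  | mul x y hx' hy' hx hy =>
    have hx' : x ∈ supported R t := supported_mono hst hx'
    have hy' : y ∈ supported R t := supported_mono hst hy'
    rw [Derivation.leibniz]
    exact add_mem (mul_mem hx' hy) (mul_mem hy' hx)

end MvPolynomial

theorem Finsupp.induction_single_one {ι : Type*} {motive : (ι →₀ ℕ) → Prop} (K : ι →₀ ℕ)
    (zero : motive 0) (step : ∀ i K, motive K → motive (single i 1 + K)) : motive K := by
  induction K using Finsupp.induction with
  | zero => exact zero
  | single_add i b K _ hb ih =>
    clear hb
    induction b with
    | zero => simpa using ih
    | succ b ihb => rw [add_comm b, single_add, add_assoc]; exact step i _ ihb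

theorem totalD_X_inl (i j : Fin p) :
    totalD p q i (X (Sum.inl j)) = if i = j then 1 else 0 := by
  simp [totalD, mkDerivation_X]

theorem totalD_X_inr (i : Fin p) (j : Fin q) (M : Fin p →₀ ℕ) :
    totalD p q i (X (Sum.inr (j, M))) = X (Sum.inr (j, M + Finsupp.single i 1)) := by
  simp [totalD, mkDerivation_X]

theorem totalD_commute (i j : Fin p) :
    Commute (totalD p q i).toLinearMap (totalD p q j).toLinearMap := by
  refine LinearMap.ext fun f => ?_
  induction f using MvPolynomial.induction_on with
  | C a => simp [← algebraMap_eq]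
  | add f g hf hg => simp_all
  | mul_X f v hf =>
    have hX : totalD p q i (totalD p q j (X v)) = totalD p q j (totalD p q i (X v)) := by
      rcases v with l | ⟨k, M⟩
      · simp [totalD_X_inl, apply_ite]
      · simp only [totalD_X_inr, add_right_comm]
    simp_all [Derivation.leibniz]
    ring

/-- Since the total derivatives commute, they generate a commutative submonoid of
`Module.End ℚ (JetRing p q)`, inside which `D_K` is the commutative product `∏ D_i ^ K_i`. -/
noncomputable abbrev totalDSubmonoid (p q : ℕ) : Submonoid (Module.End ℚ (JetRing p q)) :=
  Submonoid.closure (Set.range fun i => (totalD p q i).toLinearMap)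

instance : IsMulCommutative (totalDSubmonoid p q) :=
  Submonoid.isMulCommutative_closure _ <| by
    rintro _ ⟨i, rfl⟩ _ ⟨j, rfl⟩
    exact totalD_commute i j

noncomputable def totalDSubmonoid.gen (i : Fin p) : totalDSubmonoid p q :=
  ⟨_, Submonoid.subset_closure ⟨i, rfl⟩⟩

section

open scoped IsMulCommutative

theorem DmultiK_eq_prod (K : Fin p →₀ ℕ) :
    DmultiK p q K = ↑(K.prod fun i k => totalDSubmonoid.gen (q := q) i ^ k) := by
  rw [Finsupp.prod_fintype _ _ (fun _ => pow_zero _), Fin.prod_univ_def, Submonoid.coe_list_prod,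
    List.map_map, DmultiK, List.prod_eq_foldr, List.foldr_map]
  rfl

theorem DmultiK_add (K L : Fin p →₀ ℕ) :
    DmultiK p q (K + L) = DmultiK p q K * DmultiK p q L := by
  simp only [DmultiK_eq_prod, Submonoid.coe_mul,
    Finsupp.prod_add_index' (fun _ => pow_zero _) (fun _ => pow_add _)]

theorem DmultiK_single (i : Fin p) (b : ℕ) :
    DmultiK p q (Finsupp.single i b) = (totalD p q i).toLinearMap ^ b := by
  rw [DmultiK_eq_prod, Finsupp.prod_single_index (by rw [pow_zero]), SubmonoidClass.coe_pow]
  rfl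

theorem DmultiK_zero : DmultiK p q 0 = 1 := by
  rw [DmultiK_eq_prod, Finsupp.prod_zero_index, Submonoid.coe_one]

end

theorem DmultiK_single_one_add (i : Fin p) (K : Fin p →₀ ℕ) (Q : JetRing p q) :
    DmultiK p q (Finsupp.single i 1 + K) Q = totalD p q i (DmultiK p q K Q) := by
  rw [DmultiK_add, DmultiK_single, pow_one]
  rfl

theorem DmultiK_X (K : Fin p →₀ ℕ) (j : Fin q) (M : Fin p →₀ ℕ) :
    DmultiK p q K (X (Sum.inr (j, M))) = X (Sum.inr (j, M + K)) := by
  induction K using Finsupp.induction_single_one with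
  | zero => simp [DmultiK_zero]
  | step i K ih =>
    rw [DmultiK_single_one_add, ih, totalD_X_inr, add_assoc, add_comm K]

namespace OrthoSystem

variable (S : OrthoSystem p q n)

theorem rlt_of_rlt_of_rk {a b c : Fin q × (Fin p →₀ ℕ)} (hab : S.rlt a b) (hbc : S.rk b c) :
    S.rlt a c :=
  ⟨S.rk_trans _ _ _ hab.1 hbc, by rintro rfl; exact hab.2 (S.rk_antisymm _ _ hab.1 hbc)⟩

theorem rlt_add_right {i j : Fin q} {J K : Fin p →₀ ℕ} (h : S.rlt (i, J) (j, K))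
    (L : Fin p →₀ ℕ) : S.rlt (i, J + L) (j, K + L) :=
  ⟨(S.rk_compat _ _ _ _ L).1 h.1, fun he => h.2 <| by
    obtain ⟨hij, hJK⟩ := Prod.ext_iff.1 he
    exact Prod.ext hij (add_right_cancel hJK)⟩

/-- Dickson's lemma makes a positive ranking a well-order. -/
theorem wellFounded_rlt : WellFounded S.rlt := by
  let _ : IsPreorder _ S.rk := { refl := S.rk_refl, trans := S.rk_trans }
  have dickson : WellQuasiOrdered fun a b : Fin q × (Fin p →₀ ℕ) => a.1 = b.1 ∧ a.2 ≤ b.2 :=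
    (Finite.wellQuasiOrdered _).prod wellQuasiOrdered_le
  have hrk : WellQuasiOrdered S.rk := fun f => by
    obtain ⟨m, m', hmm', heq, hle⟩ := dickson f
    obtain ⟨M, hM⟩ := le_iff_exists_add.1 hle
    refine ⟨m, m', hmm', ?_⟩
    rw [show f m' = ((f m).1, (f m).2 + M) from Prod.ext heq.symm hM]
    exact S.rk_pos _ _ M
  exact Subrelation.wf (fun h => ⟨h.1, fun h' => h.2 (S.rk_antisymm _ _ h.1 h')⟩) hrk.wellFounded

def below (w : Fin q × (Fin p →₀ ℕ)) : Set (JetVar p q) :=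
  Sum.elim (fun _ => True) (S.rlt · w)

theorem inl_mem_below (i : Fin p) (w : Fin q × (Fin p →₀ ℕ)) : Sum.inl i ∈ S.below w :=
  trivial

theorem totalD_mem_supported_below (i : Fin p) {j : Fin q} {M : Fin p →₀ ℕ}
    {Q : JetRing p q} (hQ : Q ∈ supported ℚ (S.below (j, M))) :
    totalD p q i Q ∈ supported ℚ (S.below (j, M + Finsupp.single i 1)) := by
  refine derivation_mem_supported _ ?_ ?_ hQ
  · rintro (l | u) hu
    · exact S.inl_mem_below l _
    · exact S.rlt_of_rlt_of_rk hu (S.rk_pos _ _ _)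
  · rintro (l | ⟨k, N⟩) hu
    · rw [totalD_X_inl]
      split_ifs <;> simp
    · rw [totalD_X_inr]
      exact X_mem_supported.2 (S.rlt_add_right hu _)

theorem DmultiK_mem_supported_below (K : Fin p →₀ ℕ) {j : Fin q} {M : Fin p →₀ ℕ}
    {Q : JetRing p q} (hQ : Q ∈ supported ℚ (S.below (j, M))) :
    DmultiK p q K Q ∈ supported ℚ (S.below (j, M + K)) := by
  induction K using Finsupp.induction_single_one with
  | zero => simpa [DmultiK_zero] using hQ
  | step i K ih =>
    rw [DmultiK_single_one_add, add_comm _ K, ← add_assoc]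
    exact S.totalD_mem_supported_below i ih

theorem X_sub_DmultiK_P_mem_diffIdeal (α : Fin n) (L : Fin p →₀ ℕ) :
    X (Sum.inr (S.ii α, S.JJ α + L)) - DmultiK p q L (S.P α) ∈ S.diffIdeal := by
  rw [← DmultiK_X, ← map_sub]
  exact Ideal.subset_span ⟨α, L, rfl⟩

theorem totalD_mem_diffIdeal (i : Fin p) {x : JetRing p q} (hx : x ∈ S.diffIdeal) :
    totalD p q i x ∈ S.diffIdeal := by
  induction hx using Submodule.span_induction with
  | mem x hx =>
    obtain ⟨α, L, rfl⟩ := hx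
    rw [← DmultiK_single_one_add]
    exact Ideal.subset_span ⟨α, _, rfl⟩
  | zero => simp
  | add x y _ _ hx hy => simpa using add_mem hx hy
  | smul a x hx' hx =>
    rw [smul_eq_mul, Derivation.leibniz]
    exact add_mem (S.diffIdeal.mul_mem_left a hx) (S.diffIdeal.mul_mem_right _ hx')

theorem DmultiK_mem_diffIdeal (K : Fin p →₀ ℕ) {x : JetRing p q} (hx : x ∈ S.diffIdeal) :
    DmultiK p q K x ∈ S.diffIdeal := by
  induction K using Finsupp.induction_single_one with
  | zero => simpa [DmultiK_zero] using hx
  | step i K ih =>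
    rw [DmultiK_single_one_add]
    exact S.totalD_mem_diffIdeal i ih

def parametricVars : Set (JetVar p q) :=
  Sum.elim (fun _ => True) (¬ S.principal ·)

theorem inB_iff_mem_supported {Q : JetRing p q} :
    S.inB Q ↔ Q ∈ supported ℚ S.parametricVars := by
  rw [mem_supported]
  exact ⟨fun h => fun | .inl _, _ => trivial | .inr u, hu => h u hu, fun h u hu => h hu⟩

open Classical in
/-- The right-hand side `D_L P^α` of the prolonged equation for a principal derivative
`(i^α, J^α L)`, for one chosen such `α, L`; a parametric derivative is its own right-hand side. -/
noncomputable def rhs (w : Fin q × (Fin p →₀ ℕ)) : JetRing p q :=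
  if h : S.principal w then DmultiK p q h.choose_spec.choose (S.P h.choose) else X (Sum.inr w)

theorem exists_rhs_eq {w : Fin q × (Fin p →₀ ℕ)} (h : S.principal w) :
    ∃ α L, w = (S.ii α, S.JJ α + L) ∧ S.rhs w = DmultiK p q L (S.P α) :=
  ⟨h.choose, h.choose_spec.choose, h.choose_spec.choose_spec, dif_pos h⟩

theorem rhs_of_not_principal {w : Fin q × (Fin p →₀ ℕ)} (h : ¬ S.principal w) :
    S.rhs w = X (Sum.inr w) :=
  dif_neg h

theorem mk_rhs (w : Fin q × (Fin p →₀ ℕ)) :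
    Ideal.Quotient.mk S.diffIdeal (S.rhs w) = Ideal.Quotient.mk S.diffIdeal (X (Sum.inr w)) := by
  by_cases h : S.principal w
  · obtain ⟨α, L, rfl, hrhs⟩ := S.exists_rhs_eq h
    rw [hrhs, eq_comm, Ideal.Quotient.eq]
    exact S.X_sub_DmultiK_P_mem_diffIdeal α L
  · rw [S.rhs_of_not_principal h]

theorem rhs_mem_supported_below (hS : S.orthonomic) {w : Fin q × (Fin p →₀ ℕ)}
    (h : S.principal w) : S.rhs w ∈ supported ℚ (S.below w) := by
  obtain ⟨α, L, rfl, hrhs⟩ := S.exists_rhs_eq h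
  rw [hrhs]
  refine S.DmultiK_mem_supported_below _ (mem_supported.2 ?_)
  rintro (l | u) hu
  · exact S.inl_mem_below l _
  · exact (hS _ u hu).2

theorem rhs_eq_of_passive (hpass : S.passive) (α : Fin n) (L : Fin p →₀ ℕ) :
    S.rhs (S.ii α, S.JJ α + L) = DmultiK p q L (S.P α) := by
  obtain ⟨β, M, hw, hrhs⟩ := S.exists_rhs_eq ⟨α, L, rfl⟩
  rw [hrhs]
  exact hpass _ _ _ _ hw.symm

open Classical in
noncomputable def substBelow (w : Fin q × (Fin p →₀ ℕ))
    (f : Fin q × (Fin p →₀ ℕ) → JetRing p q) : JetVar p q → JetRing p q :=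
  Sum.elim (X ∘ Sum.inl) fun u => if S.rlt u w then f u else X (Sum.inr u)

open Classical in
noncomputable def normalFormDeriv : Fin q × (Fin p →₀ ℕ) → JetRing p q :=
  S.wellFounded_rlt.fix fun w rec =>
    aeval (Sum.elim (X ∘ Sum.inl) fun u => if h : S.rlt u w then rec u h else X (Sum.inr u))
      (S.rhs w)

noncomputable def normalForm : JetRing p q →ₐ[ℚ] JetRing p q :=
  aeval (Sum.elim (X ∘ Sum.inl) S.normalFormDeriv)

theorem normalFormDeriv_eq (w : Fin q × (Fin p →₀ ℕ)) :
    S.normalFormDeriv w = aeval (S.substBelow w S.normalFormDeriv) (S.rhs w) := by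
  rw [normalFormDeriv, WellFounded.fix_eq]
  simp only [substBelow, dite_eq_ite]

theorem normalFormDeriv_of_not_principal {w : Fin q × (Fin p →₀ ℕ)} (h : ¬ S.principal w) :
    S.normalFormDeriv w = X (Sum.inr w) := by
  rw [normalFormDeriv_eq, S.rhs_of_not_principal h, aeval_X, substBelow, Sum.elim_inr,
    if_neg fun h' => h'.2 rfl]

theorem normalFormDeriv_of_principal (hS : S.orthonomic) {w : Fin q × (Fin p →₀ ℕ)}
    (h : S.principal w) : S.normalFormDeriv w = S.normalForm (S.rhs w) := by
  rw [normalFormDeriv_eq]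
  refine aeval_congr_of_mem_supported (S.rhs_mem_supported_below hS h) ?_
  rintro (l | u) hu
  · rfl
  · exact if_pos hu

theorem mk_normalFormDeriv (w : Fin q × (Fin p →₀ ℕ)) :
    Ideal.Quotient.mk S.diffIdeal (S.normalFormDeriv w)
      = Ideal.Quotient.mk S.diffIdeal (X (Sum.inr w)) := by
  induction w using S.wellFounded_rlt.induction with
  | _ w ih =>
    rw [normalFormDeriv_eq, mk_aeval_eq_mk, mk_rhs]
    rintro (l | u)
    · rfl
    · simp only [substBelow, Sum.elim_inr]
      split_ifs with hu
      · exact ih u hu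
      · rfl

theorem normalFormDeriv_mem_supported (hS : S.orthonomic) (w : Fin q × (Fin p →₀ ℕ)) :
    S.normalFormDeriv w ∈ supported ℚ S.parametricVars := by
  induction w using S.wellFounded_rlt.induction with
  | _ w ih =>
    by_cases h : S.principal w
    · rw [normalFormDeriv_eq]
      refine aeval_mem_of_mem_supported (S.rhs_mem_supported_below hS h) ?_
      rintro (l | u) hu
      · exact X_mem_supported.2 trivial
      · simp only [substBelow, Sum.elim_inr, if_pos (show S.rlt u w from hu)]
        exact ih u hu
    · rw [S.normalFormDeriv_of_not_principal h]
      exact X_mem_supported.2 h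

theorem normalForm_mem_supported (hS : S.orthonomic) (Q : JetRing p q) :
    S.normalForm Q ∈ supported ℚ S.parametricVars := by
  refine aeval_mem_of_mem_supported (s := Set.univ) (by simp) ?_
  rintro (l | u) -
  · exact X_mem_supported.2 trivial
  · exact S.normalFormDeriv_mem_supported hS u

theorem mk_normalForm (Q : JetRing p q) :
    Ideal.Quotient.mk S.diffIdeal (S.normalForm Q) = Ideal.Quotient.mk S.diffIdeal Q := by
  refine mk_aeval_eq_mk ?_ Q
  rintro (l | u)
  · rfl
  · exact S.mk_normalFormDeriv u

theorem normalForm_of_mem_supported {Q : JetRing p q}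
    (hQ : Q ∈ supported ℚ S.parametricVars) : S.normalForm Q = Q := by
  conv_rhs => rw [← aeval_X_left_apply Q]
  refine aeval_congr_of_mem_supported hQ ?_
  rintro (l | u) hu
  · rfl
  · exact S.normalFormDeriv_of_not_principal hu

theorem diffIdeal_le_ker_normalForm (hS : S.orthonomic) (hpass : S.passive) :
    S.diffIdeal ≤ RingHom.ker S.normalForm := by
  refine Ideal.span_le.2 ?_
  rintro _ ⟨α, L, rfl⟩
  rw [SetLike.mem_coe, RingHom.mem_ker, map_sub, DmultiK_X, map_sub, sub_eq_zero]
  calc S.normalForm (X (Sum.inr (S.ii α, S.JJ α + L)))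
      = S.normalFormDeriv (S.ii α, S.JJ α + L) := aeval_X _ _
    _ = S.normalForm (S.rhs (S.ii α, S.JJ α + L)) := S.normalFormDeriv_of_principal hS ⟨α, L, rfl⟩
    _ = S.normalForm (DmultiK p q L (S.P α)) := by rw [S.rhs_eq_of_passive hpass]

theorem eq_zero_of_inB_of_mem_diffIdeal (hS : S.orthonomic) (hpass : S.passive)
    {Q : JetRing p q} (hB : S.inB Q) (hI : Q ∈ S.diffIdeal) : Q = 0 := by
  rw [← S.normalForm_of_mem_supported (S.inB_iff_mem_supported.1 hB)]
  exact S.diffIdeal_le_ker_normalForm hS hpass hI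

theorem exists_inB_sub_mem_diffIdeal (hS : S.orthonomic) (Q : JetRing p q) :
    ∃ R, S.inB R ∧ Q - R ∈ S.diffIdeal :=
  ⟨S.normalForm Q, S.inB_iff_mem_supported.2 (S.normalForm_mem_supported hS Q),
    Ideal.Quotient.eq.1 (S.mk_normalForm Q).symm⟩

theorem inB_red (hS : S.orthonomic) (Q : JetRing p q) : S.inB (S.red Q) := by
  rw [red, dif_pos (S.exists_inB_sub_mem_diffIdeal hS Q)]
  exact (S.exists_inB_sub_mem_diffIdeal hS Q).choose_spec.1

theorem sub_red_mem_diffIdeal (hS : S.orthonomic) (Q : JetRing p q) :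
    Q - S.red Q ∈ S.diffIdeal := by
  rw [red, dif_pos (S.exists_inB_sub_mem_diffIdeal hS Q)]
  exact (S.exists_inB_sub_mem_diffIdeal hS Q).choose_spec.2

theorem red_eq_of_sub_mem_diffIdeal (hS : S.orthonomic) (hpass : S.passive)
    {Q R : JetRing p q} (hR : S.inB R) (hQR : Q - R ∈ S.diffIdeal) : S.red Q = R := by
  refine sub_eq_zero.1 (S.eq_zero_of_inB_of_mem_diffIdeal hS hpass ?_ ?_)
  · have hred := S.inB_red hS Q
    rw [inB_iff_mem_supported] at hred hR ⊢
    exact sub_mem hred hR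
  · simpa using sub_mem hQR (S.sub_red_mem_diffIdeal hS Q)

theorem red_DmultiK_red (hS : S.orthonomic) (hpass : S.passive) (K : Fin p →₀ ℕ)
    (Q : JetRing p q) : S.red (DmultiK p q K (S.red Q)) = S.red (DmultiK p q K Q) := by
  refine S.red_eq_of_sub_mem_diffIdeal hS hpass (S.inB_red hS _) ?_
  have hK := S.DmultiK_mem_diffIdeal K (S.sub_red_mem_diffIdeal hS Q)
  rw [map_sub] at hK
  simpa using sub_mem (S.sub_red_mem_diffIdeal hS (DmultiK p q K Q)) hK

end OrthoSystem

theorem dfrakK_concat_general (S : OrthoSystem p q n)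
    (hS : S.orthonomic) (hpass : S.passive)
    (K L : Fin p →₀ ℕ) (P : JetRing p q) :
    S.dfrakK K (S.dfrakK L P) = S.dfrakK (K + L) P := by
  rw [OrthoSystem.dfrakK, OrthoSystem.dfrakK, OrthoSystem.dfrakK, S.red_DmultiK_red hS hpass,
    DmultiK_add, Module.End.mul_apply]

/-- The intrinsic multi-differential operators are compatible with concatenation:
`𝔇_K ∘ 𝔇_L = 𝔇_{KL}` on `B`. -/
theorem dfrakK_concat (S : OrthoSystem p q n)
    (hS : S.orthonomic) (hpass : S.passive)
    (K L : Fin p →₀ ℕ) (P : JetRing p q) (hP : S.inB P) :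
    S.dfrakK K (S.dfrakK L P) = S.dfrakK (K + L) P :=
  dfrakK_concat_general S hS hpass K L P
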